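/- Let ρ > 0, M > 0 and t ∈ (0,1], and let W : ℝ^n → ℝ^n be a Hölder continuous vector field of exponent t, supported in the ball B_ρ of radius ρ about the origin, with sup norm plus Hölder-t seminorm at most M. Then there is a constant C > 0, depending only on n, ρ, t and M, such that for all μ₁, μ₂ ∈ ℂ^n, each of whose real and imaginary parts are orthogonal unit vectors in ℝ^n, one has sup_{x ∈ B_ρ} |exp(i N_{μ₁}^{-1}(−μ₁·W)(x)) − exp(i N_{μ₂}^{-1}(−μ₂·W)(x))| ≤ C |μ₁ − μ₂|^t. -/

import Mathlib

/-!
In the plane spanned by `Re μ` and `Im μ`, `N_μ⁻¹ f (x)` is the Cauchy transform of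
`y ↦ f (x - y₁ Re μ - y₂ Im μ)`, which vanishes for `|y| > 2ρ` when `f` is supported in `B_ρ` and
`|x| ≤ ρ`. In polar coordinates the kernel `1/|y|` has integral `2πR` over the disc of radius `R`,
so `N_μ⁻¹(-μ·W)` is bounded by `2√2 ρ M` and two such transforms differ by at most `2ρ` times the
supremum of the difference of their integrands on the disc. Replacing `μ₂` by `μ₁` moves the point
`x - y₁ Re μ - y₂ Im μ` by at most `2|y| |μ₁ - μ₂|`, which the Hölder bound turns into
`|μ₁ - μ₂|^t`, while the term linear in `μ₁ - μ₂` is absorbed using `|μ₁ - μ₂| ≤ 2√2`. Finally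
`exp (i ·)` is `e^L`-Lipschitz on the disc of radius `L`.
-/

open MeasureTheory Complex Real Set
open scoped BigOperators

noncomputable section

/-- `ℝ^n` with the Euclidean norm. -/
abbrev Euc (n : ℕ) : Type := EuclideanSpace ℝ (Fin n)

/-- The vector of real parts of `μ ∈ ℂⁿ`. -/
noncomputable def reV {n : ℕ} (μ : EuclideanSpace ℂ (Fin n)) : Euc n := WithLp.toLp 2 (fun j => (μ j).re)

/-- The vector of imaginary parts of `μ ∈ ℂⁿ`. -/
noncomputable def imV {n : ℕ} (μ : EuclideanSpace ℂ (Fin n)) : Euc n := WithLp.toLp 2 (fun j => (μ j).im)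

/-- The Cauchy-transform inverse `N_μ⁻¹` of the transport operator `μ·∇`. -/
noncomputable def Nmuinv {n : ℕ} (μ : EuclideanSpace ℂ (Fin n)) (f : Euc n → ℂ) : Euc n → ℂ :=
  fun x => (1 / (2 * (π : ℂ))) *
    ∫ y : ℝ × ℝ, f (x - y.1 • reV μ - y.2 • imV μ) / ((y.1 : ℂ) + (y.2 : ℂ) * Complex.I)

/-- `μ` has orthonormal real and imaginary parts. -/
def GoodMu {n : ℕ} (μ : EuclideanSpace ℂ (Fin n)) : Prop :=
  ‖reV μ‖ = 1 ∧ ‖imV μ‖ = 1 ∧ (inner ℝ (reV μ) (imV μ) : ℝ) = 0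

/-- The function `x ↦ μ · W(x) = Σ_j μ_j W_j(x)`. -/
noncomputable def muDotW {n : ℕ} (μ : EuclideanSpace ℂ (Fin n)) (W : Euc n → Euc n) :
    Euc n → ℂ :=
  fun x => ∑ j, μ j * ((W x j : ℝ) : ℂ)

/-- `W` is Hölder continuous of exponent `t`, with sup norm plus Hölder seminorm at most `M`. -/
def HolderBdd {n : ℕ} (t M : ℝ) (W : Euc n → Euc n) : Prop :=
  ∃ a b : ℝ, 0 ≤ a ∧ 0 ≤ b ∧ a + b ≤ M ∧ (∀ x, ‖W x‖ ≤ a) ∧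
    ∀ x y, ‖W x - W y‖ ≤ b * ‖x - y‖ ^ t

lemma continuous_of_norm_sub_le_mul_rpow {E F : Type*} [SeminormedAddCommGroup E]
    [SeminormedAddCommGroup F] {f : E → F} {b t : ℝ} (ht : 0 < t)
    (hf : ∀ x y, ‖f x - f y‖ ≤ b * ‖x - y‖ ^ t) : Continuous f := by
  refine continuous_iff_continuousAt.2 fun x => tendsto_iff_norm_sub_tendsto_zero.2 <|
    squeeze_zero (fun _ => norm_nonneg _) (fun z => hf z x) ?_
  have hcont : Continuous fun z => b * ‖z - x‖ ^ t := by fun_prop (disch := exact ht.le)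
  simpa [zero_rpow ht.ne'] using hcont.tendsto x

lemma le_rpow_sub_mul_rpow {d D t : ℝ} (hd : 0 ≤ d) (hdD : d ≤ D) (ht : t ≤ 1) :
    d ≤ D ^ (1 - t) * d ^ t :=
  calc d = d ^ (1 - t) * d ^ t := by rw [← rpow_add' hd (by norm_num), sub_add_cancel, rpow_one]
    _ ≤ D ^ (1 - t) * d ^ t := by gcongr

lemma norm_cexp_I_mul_sub_cexp_I_mul_le {L : ℝ} {z w : ℂ} (hz : ‖z‖ ≤ L) (hw : ‖w‖ ≤ L) :
    ‖exp (I * z) - exp (I * w)‖ ≤ Real.exp L * ‖z - w‖ := by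
  have hderiv : ∀ u ∈ Metric.closedBall (0 : ℂ) L, HasDerivWithinAt (fun u => exp (I * u))
      (exp (I * u) * (I * 1)) (Metric.closedBall 0 L) u :=
    fun u _ => (((hasDerivAt_id u).const_mul I).cexp).hasDerivWithinAt
  have hbound : ∀ u ∈ Metric.closedBall (0 : ℂ) L, ‖exp (I * u) * (I * 1)‖ ≤ Real.exp L := by
    intro u hu
    rw [mem_closedBall_zero_iff] at hu
    rw [mul_one, norm_mul, norm_I, mul_one, norm_exp, Real.exp_le_exp, mul_re, I_re, I_im]
    linarith [neg_abs_le u.im, abs_im_le_norm u]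
  exact (convex_closedBall 0 L).norm_image_sub_le_of_norm_hasDerivWithin_le hderiv hbound
    (mem_closedBall_zero_iff.2 hw) (mem_closedBall_zero_iff.2 hz)

def cauchyMajorant (R : ℝ) : ℝ × ℝ → ℝ :=
  {y : ℝ × ℝ | ‖(y.1 : ℂ) + y.2 * I‖ ≤ R}.indicator fun y => ‖(y.1 : ℂ) + y.2 * I‖⁻¹

lemma measurable_cauchyMajorant (R : ℝ) : Measurable (cauchyMajorant R) :=
  (Measurable.inv (by fun_prop)).indicator (measurableSet_le (by fun_prop) measurable_const)

lemma cauchyMajorant_nonneg (R : ℝ) (y : ℝ × ℝ) : 0 ≤ cauchyMajorant R y :=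
  indicator_nonneg (fun _ _ => inv_nonneg.2 (norm_nonneg _)) y

lemma norm_ofReal_mul_cos_add_ofReal_mul_sin_mul_I {r : ℝ} (hr : 0 ≤ r) (θ : ℝ) :
    ‖((r * Real.cos θ : ℝ) : ℂ) + (r * Real.sin θ : ℝ) * I‖ = r := by
  rw [norm_add_mul_I, mul_pow, mul_pow, ← mul_add, Real.cos_sq_add_sin_sq, mul_one, sqrt_sq hr]

lemma lintegral_cauchyMajorant (R : ℝ) :
    ∫⁻ y, ENNReal.ofReal (cauchyMajorant R y) = ENNReal.ofReal (2 * π * R) := by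
  have hS : MeasurableSet (Ioc 0 R ×ˢ Ioo (-π) π) := measurableSet_Ioc.prod measurableSet_Ioo
  have polar : EqOn
      (fun p : ℝ × ℝ => ENNReal.ofReal p.1 • ENNReal.ofReal (cauchyMajorant R (polarCoord.symm p)))
      ((Ioc 0 R ×ˢ Ioo (-π) π).indicator 1) polarCoord.target := by
    rintro ⟨r, θ⟩ ⟨hr, hθ⟩
    have hr : 0 < r := hr
    have hθ : θ ∈ Ioo (-π) π := hθ
    have hnorm := norm_ofReal_mul_cos_add_ofReal_mul_sin_mul_I hr.le θ
    by_cases hrR : r ≤ R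
    · simp only [cauchyMajorant, polarCoord_symm_apply, indicator, mem_ofPred_eq, hnorm, mem_prod,
        mem_Ioc, hr, hrR, hθ, and_self, if_true, smul_eq_mul, ← ENNReal.ofReal_mul hr.le,
        mul_inv_cancel₀ hr.ne', ENNReal.ofReal_one, Pi.one_apply]
    · simp only [cauchyMajorant, polarCoord_symm_apply, indicator, mem_ofPred_eq, hnorm, mem_prod,
        mem_Ioc, hrR, and_false, false_and, if_false, ENNReal.ofReal_zero, smul_zero]
  have hsub : Ioc 0 R ×ˢ Ioo (-π) π ⊆ polarCoord.target := by
    rw [polarCoord_target]; exact prod_mono Ioc_subset_Ioi_self subset_rfl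
  rw [← lintegral_comp_polarCoord_symm,
    setLIntegral_congr_fun polarCoord.open_target.measurableSet polar, lintegral_indicator_one hS,
    Measure.restrict_apply hS, inter_eq_left.2 hsub,
    Measure.volume_eq_prod, Measure.prod_prod, Real.volume_Ioc, Real.volume_Ioo,
    ← ENNReal.ofReal_mul' (by linarith [pi_pos])]
  congr 1; ring

lemma integrable_cauchyMajorant (R : ℝ) : Integrable (cauchyMajorant R) :=
  ⟨(measurable_cauchyMajorant R).aestronglyMeasurable, by
    rw [hasFiniteIntegral_iff_ofReal (Filter.Eventually.of_forall (cauchyMajorant_nonneg R)),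
      lintegral_cauchyMajorant]
    exact ENNReal.ofReal_lt_top⟩

lemma integral_cauchyMajorant {R : ℝ} (hR : 0 ≤ R) : ∫ y, cauchyMajorant R y = 2 * π * R := by
  rw [integral_eq_lintegral_of_nonneg_ae (Filter.Eventually.of_forall (cauchyMajorant_nonneg R))
    (measurable_cauchyMajorant R).aestronglyMeasurable, lintegral_cauchyMajorant,
    ENNReal.toReal_ofReal (by positivity)]

lemma norm_div_le_cauchyMajorant {g : ℝ × ℝ → ℂ} {R A : ℝ}
    (hA : ∀ y : ℝ × ℝ, ‖(y.1 : ℂ) + y.2 * I‖ ≤ R → ‖g y‖ ≤ A)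
    (hR : ∀ y : ℝ × ℝ, R < ‖(y.1 : ℂ) + y.2 * I‖ → g y = 0) (y : ℝ × ℝ) :
    ‖g y / ((y.1 : ℂ) + y.2 * I)‖ ≤ A * cauchyMajorant R y := by
  by_cases hy : ‖(y.1 : ℂ) + y.2 * I‖ ≤ R
  · simp only [cauchyMajorant, indicator, mem_ofPred_eq, hy, if_true]
    rw [norm_div, div_eq_mul_inv]
    exact mul_le_mul_of_nonneg_right (hA y hy) (inv_nonneg.2 (norm_nonneg _))
  · simp [cauchyMajorant, hy, hR y (not_le.1 hy)]

lemma integrable_div_ofReal_add_ofReal_mul_I {g : ℝ × ℝ → ℂ} {R A : ℝ}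
    (hg : AEStronglyMeasurable g) (hA : ∀ y : ℝ × ℝ, ‖(y.1 : ℂ) + y.2 * I‖ ≤ R → ‖g y‖ ≤ A)
    (hR : ∀ y : ℝ × ℝ, R < ‖(y.1 : ℂ) + y.2 * I‖ → g y = 0) :
    Integrable fun y : ℝ × ℝ => g y / ((y.1 : ℂ) + y.2 * I) :=
  ((integrable_cauchyMajorant R).const_mul A).mono' (hg.div₀ (by fun_prop))
    (Filter.Eventually.of_forall (norm_div_le_cauchyMajorant hA hR))

lemma norm_integral_div_ofReal_add_ofReal_mul_I_le {g : ℝ × ℝ → ℂ} {R A : ℝ} (hR₀ : 0 ≤ R)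
    (hA : ∀ y : ℝ × ℝ, ‖(y.1 : ℂ) + y.2 * I‖ ≤ R → ‖g y‖ ≤ A)
    (hR : ∀ y : ℝ × ℝ, R < ‖(y.1 : ℂ) + y.2 * I‖ → g y = 0) :
    ‖∫ y : ℝ × ℝ, g y / ((y.1 : ℂ) + y.2 * I)‖ ≤ 2 * π * (R * A) :=
  calc ‖∫ y : ℝ × ℝ, g y / ((y.1 : ℂ) + y.2 * I)‖
      ≤ ∫ y, A * cauchyMajorant R y :=
        norm_integral_le_of_norm_le ((integrable_cauchyMajorant R).const_mul A)
          (Filter.Eventually.of_forall (norm_div_le_cauchyMajorant hA hR))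
    _ = 2 * π * (R * A) := by rw [integral_const_mul, integral_cauchyMajorant hR₀]; ring

lemma norm_one_div_two_pi_mul_le {z : ℂ} {B : ℝ} (h : ‖z‖ ≤ 2 * π * B) :
    ‖1 / (2 * (π : ℂ)) * z‖ ≤ B := by
  rw [norm_mul, norm_div, norm_one, norm_mul, Complex.norm_ofNat, norm_real,
    Real.norm_of_nonneg pi_pos.le, one_div_mul_eq_div, div_le_iff₀ (by positivity)]
  linarith

section

variable {n : ℕ}

lemma norm_sq_eq_norm_reV_sq_add_norm_imV_sq (μ : EuclideanSpace ℂ (Fin n)) :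
    ‖μ‖ ^ 2 = ‖reV μ‖ ^ 2 + ‖imV μ‖ ^ 2 := by
  simp only [EuclideanSpace.norm_sq_eq, ← Finset.sum_add_distrib]
  exact Finset.sum_congr rfl fun j _ => by
    rw [Complex.sq_norm, Complex.normSq_apply]; simp [reV, imV, sq]

lemma norm_reV_le (μ : EuclideanSpace ℂ (Fin n)) : ‖reV μ‖ ≤ ‖μ‖ :=
  le_of_pow_le_pow_left₀ two_ne_zero (norm_nonneg μ) <| by
    rw [norm_sq_eq_norm_reV_sq_add_norm_imV_sq]; exact le_add_of_nonneg_right (sq_nonneg _)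

lemma norm_imV_le (μ : EuclideanSpace ℂ (Fin n)) : ‖imV μ‖ ≤ ‖μ‖ :=
  le_of_pow_le_pow_left₀ two_ne_zero (norm_nonneg μ) <| by
    rw [norm_sq_eq_norm_reV_sq_add_norm_imV_sq]; exact le_add_of_nonneg_left (sq_nonneg _)

lemma reV_sub (μ ν : EuclideanSpace ℂ (Fin n)) : reV (μ - ν) = reV μ - reV ν := by
  ext j; simp [reV]

lemma imV_sub (μ ν : EuclideanSpace ℂ (Fin n)) : imV (μ - ν) = imV μ - imV ν := by
  ext j; simp [imV]

namespace GoodMu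

variable {μ ν : EuclideanSpace ℂ (Fin n)}

lemma norm_eq (hμ : GoodMu μ) : ‖μ‖ = √2 := by
  rw [← sqrt_sq (norm_nonneg μ), norm_sq_eq_norm_reV_sq_add_norm_imV_sq, hμ.1, hμ.2.1]
  norm_num

lemma norm_sub_le (hμ : GoodMu μ) (hν : GoodMu ν) : ‖μ - ν‖ ≤ 2 * √2 :=
  (_root_.norm_sub_le μ ν).trans_eq <| by rw [hμ.norm_eq, hν.norm_eq]; ring

lemma norm_smul_reV_add_smul_imV (hμ : GoodMu μ) (a b : ℝ) :
    ‖a • reV μ + b • imV μ‖ = ‖(a : ℂ) + b * I‖ := by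
  rw [norm_add_mul_I, ← sqrt_sq (norm_nonneg _), norm_add_sq_real, norm_smul, norm_smul,
    real_inner_smul_left, real_inner_smul_right, hμ.1, hμ.2.1, hμ.2.2]
  simp only [Real.norm_eq_abs, mul_one, mul_zero, add_zero, sq_abs]

end GoodMu

lemma norm_sum_mul_ofReal_le (μ : EuclideanSpace ℂ (Fin n)) (v : Euc n) :
    ‖∑ j, μ j * (v j : ℂ)‖ ≤ ‖μ‖ * ‖v‖ :=
  calc ‖∑ j, μ j * (v j : ℂ)‖ ≤ ∑ j, ‖μ j‖ * ‖v j‖ :=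
        (norm_sum_le _ _).trans_eq <| by simp only [norm_mul, norm_real]
    _ ≤ ‖μ‖ * ‖v‖ := by
        rw [EuclideanSpace.norm_eq μ, EuclideanSpace.norm_eq v]
        exact Real.sum_mul_le_sqrt_mul_sqrt _ _ _

lemma muDotW_sub_muDotW (μ ν : EuclideanSpace ℂ (Fin n)) (W : Euc n → Euc n)
    (z w : Euc n) :
    muDotW μ W z - muDotW ν W w =
      ∑ j, (μ - ν) j * (W z j : ℂ) + ∑ j, ν j * ((W z - W w) j : ℂ) := by
  simp only [muDotW, ← Finset.sum_sub_distrib, ← Finset.sum_add_distrib, PiLp.sub_apply,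
    ofReal_sub]
  exact Finset.sum_congr rfl fun j _ => by ring

lemma norm_muDotW_sub_muDotW_le (μ ν : EuclideanSpace ℂ (Fin n)) (W : Euc n → Euc n)
    (z w : Euc n) :
    ‖muDotW μ W z - muDotW ν W w‖ ≤ ‖μ - ν‖ * ‖W z‖ + ‖ν‖ * ‖W z - W w‖ := by
  rw [muDotW_sub_muDotW]
  exact (norm_add_le _ _).trans
    (add_le_add (norm_sum_mul_ofReal_le _ _) (norm_sum_mul_ofReal_le _ _))

lemma continuous_muDotW (μ : EuclideanSpace ℂ (Fin n)) {W : Euc n → Euc n}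
    (hW : Continuous W) : Continuous (muDotW μ W) :=
  continuous_finsetSum _ fun j _ => continuous_const.mul
    (continuous_ofReal.comp ((PiLp.continuous_apply 2 _ j).comp hW))

def planePoint (μ : EuclideanSpace ℂ (Fin n)) (x : Euc n) (y : ℝ × ℝ) : Euc n :=
  x - y.1 • reV μ - y.2 • imV μ

lemma Nmuinv_apply (μ : EuclideanSpace ℂ (Fin n)) (f : Euc n → ℂ) (x : Euc n) :
    Nmuinv μ f x = 1 / (2 * (π : ℂ)) * ∫ y : ℝ × ℝ, f (planePoint μ x y) / ((y.1 : ℂ) + y.2 * I) :=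
  rfl

lemma continuous_planePoint (μ : EuclideanSpace ℂ (Fin n)) (x : Euc n) :
    Continuous (planePoint μ x) := by
  unfold planePoint; fun_prop

lemma norm_planePoint_sub_planePoint_le (μ ν : EuclideanSpace ℂ (Fin n)) (x : Euc n)
    (y : ℝ × ℝ) :
    ‖planePoint μ x y - planePoint ν x y‖ ≤ 2 * ‖(y.1 : ℂ) + y.2 * I‖ * ‖μ - ν‖ := by
  have hdiff : planePoint μ x y - planePoint ν x y = y.1 • reV (ν - μ) + y.2 • imV (ν - μ) := by
    simp only [planePoint, reV_sub, imV_sub, smul_sub]; abel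
  have h₁ : |y.1| ≤ ‖(y.1 : ℂ) + y.2 * I‖ := by simpa using abs_re_le_norm ((y.1 : ℂ) + y.2 * I)
  have h₂ : |y.2| ≤ ‖(y.1 : ℂ) + y.2 * I‖ := by simpa using abs_im_le_norm ((y.1 : ℂ) + y.2 * I)
  rw [hdiff, norm_sub_rev μ ν]
  calc ‖y.1 • reV (ν - μ) + y.2 • imV (ν - μ)‖
      ≤ |y.1| * ‖reV (ν - μ)‖ + |y.2| * ‖imV (ν - μ)‖ := by
        simpa only [norm_smul, Real.norm_eq_abs] using
          norm_add_le (y.1 • reV (ν - μ)) (y.2 • imV (ν - μ))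
    _ ≤ ‖(y.1 : ℂ) + y.2 * I‖ * ‖ν - μ‖ + ‖(y.1 : ℂ) + y.2 * I‖ * ‖ν - μ‖ := by
        gcongr
        exacts [norm_reV_le _, norm_imV_le _]
    _ = 2 * ‖(y.1 : ℂ) + y.2 * I‖ * ‖ν - μ‖ := by ring

namespace GoodMu

variable {μ ν : EuclideanSpace ℂ (Fin n)} {f g : Euc n → ℂ} {ρ : ℝ} {x : Euc n}

lemma apply_planePoint_eq_zero (hμ : GoodMu μ) (hf : ∀ z, ρ < ‖z‖ → f z = 0) (hx : ‖x‖ ≤ ρ)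
    {y : ℝ × ℝ} (hy : 2 * ρ < ‖(y.1 : ℂ) + y.2 * I‖) : f (planePoint μ x y) = 0 := by
  apply hf
  have h := norm_sub_norm_le (y.1 • reV μ + y.2 • imV μ) x
  rw [hμ.norm_smul_reV_add_smul_imV] at h
  rw [planePoint, sub_sub, norm_sub_rev]
  linarith

lemma norm_Nmuinv_le (hμ : GoodMu μ) (hfρ : ∀ z, ρ < ‖z‖ → f z = 0)
    {A : ℝ} (hA : ∀ z, ‖f z‖ ≤ A) (hx : ‖x‖ ≤ ρ) : ‖Nmuinv μ f x‖ ≤ 2 * ρ * A := by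
  rw [Nmuinv_apply]
  refine norm_one_div_two_pi_mul_le ?_
  exact norm_integral_div_ofReal_add_ofReal_mul_I_le (by linarith [norm_nonneg x])
    (fun y _ => hA _) (fun y hy => hμ.apply_planePoint_eq_zero hfρ hx hy)

lemma norm_Nmuinv_sub_Nmuinv_le (hμ : GoodMu μ) (hν : GoodMu ν) (hf : Continuous f)
    (hg : Continuous g) (hfρ : ∀ z, ρ < ‖z‖ → f z = 0) (hgρ : ∀ z, ρ < ‖z‖ → g z = 0)
    {A B ε : ℝ} (hfA : ∀ z, ‖f z‖ ≤ A) (hgB : ∀ z, ‖g z‖ ≤ B) (hx : ‖x‖ ≤ ρ)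
    (hε : ∀ y : ℝ × ℝ, ‖(y.1 : ℂ) + y.2 * I‖ ≤ 2 * ρ →
      ‖f (planePoint μ x y) - g (planePoint ν x y)‖ ≤ ε) :
    ‖Nmuinv μ f x - Nmuinv ν g x‖ ≤ 2 * ρ * ε := by
  have hf₀ (y : ℝ × ℝ) (hy : 2 * ρ < ‖(y.1 : ℂ) + y.2 * I‖) : f (planePoint μ x y) = 0 :=
    hμ.apply_planePoint_eq_zero hfρ hx hy
  have hg₀ (y : ℝ × ℝ) (hy : 2 * ρ < ‖(y.1 : ℂ) + y.2 * I‖) : g (planePoint ν x y) = 0 :=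
    hν.apply_planePoint_eq_zero hgρ hx hy
  have hfi := integrable_div_ofReal_add_ofReal_mul_I (g := fun y => f (planePoint μ x y))
    (hf.comp (continuous_planePoint μ x)).aestronglyMeasurable (fun y _ => hfA _) hf₀
  have hgi := integrable_div_ofReal_add_ofReal_mul_I (g := fun y => g (planePoint ν x y))
    (hg.comp (continuous_planePoint ν x)).aestronglyMeasurable (fun y _ => hgB _) hg₀
  rw [Nmuinv_apply, Nmuinv_apply, ← mul_sub, ← integral_sub hfi hgi]
  simp_rw [div_sub_div_same]
  refine norm_one_div_two_pi_mul_le ?_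
  exact norm_integral_div_ofReal_add_ofReal_mul_I_le (by linarith [norm_nonneg x]) hε
    (fun y hy => by rw [hf₀ y hy, hg₀ y hy, sub_zero])

lemma norm_muDotW_le (hμ : GoodMu μ) {t M : ℝ} {W : Euc n → Euc n} (hW : HolderBdd t M W)
    (z : Euc n) : ‖muDotW μ W z‖ ≤ √2 * M := by
  obtain ⟨a, b, -, hb, habM, hWa, -⟩ := hW
  calc ‖muDotW μ W z‖ ≤ ‖μ‖ * ‖W z‖ := norm_sum_mul_ofReal_le μ (W z)
    _ ≤ √2 * M := by rw [hμ.norm_eq]; gcongr; linarith [hWa z]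

end GoodMu

namespace HolderBdd

variable {t M : ℝ} {W : Euc n → Euc n}

lemma continuous (hW : HolderBdd t M W) (ht : 0 < t) : Continuous W := by
  obtain ⟨_, _, -, -, -, -, hWb⟩ := hW
  exact continuous_of_norm_sub_le_mul_rpow ht hWb

lemma norm_muDotW_planePoint_sub_le (hW : HolderBdd t M W) (ht0 : 0 ≤ t) (ht1 : t ≤ 1)
    {μ ν : EuclideanSpace ℂ (Fin n)} (hμ : GoodMu μ) (hν : GoodMu ν) (x : Euc n) {R : ℝ}
    {y : ℝ × ℝ} (hy : ‖(y.1 : ℂ) + y.2 * I‖ ≤ R) :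
    ‖muDotW μ W (planePoint μ x y) - muDotW ν W (planePoint ν x y)‖ ≤
      M * ((2 * √2) ^ (1 - t) + √2 * (2 * R) ^ t) * ‖μ - ν‖ ^ t := by
  obtain ⟨a, b, ha, hb, habM, hWa, hWb⟩ := hW
  set d := ‖μ - ν‖
  have hR : 0 ≤ 2 * R := by linarith [norm_nonneg ((y.1 : ℂ) + y.2 * I)]
  have hdist : ‖planePoint μ x y - planePoint ν x y‖ ≤ 2 * R * d :=
    (norm_planePoint_sub_planePoint_le μ ν x y).trans (by gcongr)
  have hlip : d * ‖W (planePoint μ x y)‖ ≤ a * ((2 * √2) ^ (1 - t) * d ^ t) := by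
    rw [mul_comm a]
    exact mul_le_mul (le_rpow_sub_mul_rpow (norm_nonneg _) (hμ.norm_sub_le hν) ht1) (hWa _)
      (norm_nonneg _) (by positivity)
  have hhol : ‖ν‖ * ‖W (planePoint μ x y) - W (planePoint ν x y)‖ ≤
      √2 * (b * ((2 * R) ^ t * d ^ t)) := by
    rw [hν.norm_eq, ← mul_rpow hR (norm_nonneg _)]
    gcongr
    exact (hWb _ _).trans (by gcongr)
  calc ‖muDotW μ W (planePoint μ x y) - muDotW ν W (planePoint ν x y)‖
      ≤ d * ‖W (planePoint μ x y)‖ + ‖ν‖ * ‖W (planePoint μ x y) - W (planePoint ν x y)‖ :=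
        norm_muDotW_sub_muDotW_le μ ν W _ _
    _ ≤ a * ((2 * √2) ^ (1 - t) * d ^ t) + √2 * (b * ((2 * R) ^ t * d ^ t)) :=
        add_le_add hlip hhol
    _ ≤ M * ((2 * √2) ^ (1 - t) * d ^ t) + √2 * (M * ((2 * R) ^ t * d ^ t)) := by
        gcongr <;> linarith
    _ = M * ((2 * √2) ^ (1 - t) + √2 * (2 * R) ^ t) * d ^ t := by ring

end HolderBdd

end

theorem stmt3_general (n : ℕ) (ρ t M : ℝ) (hρ : 0 < ρ) (ht0 : 0 < t) (ht1 : t ≤ 1)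
    (hM : 0 < M) :
    ∃ C : ℝ, 0 < C ∧
      ∀ W : Euc n → Euc n,
        (∀ x, ρ < ‖x‖ → W x = 0) →
        HolderBdd t M W →
        ∀ μ₁ μ₂ : EuclideanSpace ℂ (Fin n), GoodMu μ₁ → GoodMu μ₂ →
          ∀ x : Euc n, ‖x‖ ≤ ρ →
            ‖Complex.exp (Complex.I * Nmuinv μ₁ (fun y => -muDotW μ₁ W y) x)
                - Complex.exp (Complex.I * Nmuinv μ₂ (fun y => -muDotW μ₂ W y) x)‖
              ≤ C * ‖μ₁ - μ₂‖ ^ t := by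
  set L := 2 * ρ * (√2 * M)
  set ε := M * ((2 * √2) ^ (1 - t) + √2 * (2 * (2 * ρ)) ^ t)
  refine ⟨Real.exp L * (2 * ρ * ε), by positivity, ?_⟩
  intro W hWρ hW μ₁ μ₂ hμ₁ hμ₂ x hx
  have hcont (μ : EuclideanSpace ℂ (Fin n)) : Continuous fun z => -muDotW μ W z :=
    (continuous_muDotW μ (hW.continuous ht0)).neg
  have hsupp (μ : EuclideanSpace ℂ (Fin n)) (z : Euc n) (hz : ρ < ‖z‖) : -muDotW μ W z = 0 := by
    simp [muDotW, hWρ z hz]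
  have hbound {μ : EuclideanSpace ℂ (Fin n)} (hμ : GoodMu μ) (z : Euc n) :
      ‖-muDotW μ W z‖ ≤ √2 * M := by
    rw [norm_neg]; exact hμ.norm_muDotW_le hW z
  have hN {μ : EuclideanSpace ℂ (Fin n)} (hμ : GoodMu μ) :
      ‖Nmuinv μ (fun z => -muDotW μ W z) x‖ ≤ L :=
    hμ.norm_Nmuinv_le (hsupp μ) (hbound hμ) hx
  have hdiff : ‖Nmuinv μ₁ (fun z => -muDotW μ₁ W z) x - Nmuinv μ₂ (fun z => -muDotW μ₂ W z) x‖ ≤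
      2 * ρ * (ε * ‖μ₁ - μ₂‖ ^ t) :=
    hμ₁.norm_Nmuinv_sub_Nmuinv_le hμ₂ (hcont μ₁) (hcont μ₂) (hsupp μ₁) (hsupp μ₂) (hbound hμ₁)
      (hbound hμ₂) hx fun y hy => by
        rw [neg_sub_neg, norm_sub_rev]
        exact hW.norm_muDotW_planePoint_sub_le ht0.le ht1 hμ₁ hμ₂ x hy
  calc _ ≤ Real.exp L * (2 * ρ * (ε * ‖μ₁ - μ₂‖ ^ t)) :=
        (norm_cexp_I_mul_sub_cexp_I_mul_le (hN hμ₁) (hN hμ₂)).trans (by gcongr)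
    _ = Real.exp L * (2 * ρ * ε) * ‖μ₁ - μ₂‖ ^ t := by ring

theorem stmt3 (n : ℕ) (hn : 1 ≤ n) (ρ t M : ℝ) (hρ : 0 < ρ) (ht0 : 0 < t) (ht1 : t ≤ 1)
    (hM : 0 < M) :
    ∃ C : ℝ, 0 < C ∧
      ∀ W : Euc n → Euc n,
        (∀ x, ρ < ‖x‖ → W x = 0) →
        HolderBdd t M W →
        ∀ μ₁ μ₂ : EuclideanSpace ℂ (Fin n), GoodMu μ₁ → GoodMu μ₂ →
          ∀ x : Euc n, ‖x‖ ≤ ρ →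
            ‖Complex.exp (Complex.I * Nmuinv μ₁ (fun y => -muDotW μ₁ W y) x)
                - Complex.exp (Complex.I * Nmuinv μ₂ (fun y => -muDotW μ₂ W y) x)‖
              ≤ C * ‖μ₁ - μ₂‖ ^ t :=
  stmt3_general n ρ t M hρ ht0 ht1 hM
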